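/- arXiv:2209.09242 — 5 statements merged into one kernel-verified Lean document; each statement's English description precedes it below -/
import Mathlib

section
/- A prefix is alive if and only if it is the prefix of an alive k-mer. Precisely: for every j with 0 ≤ j ≤ k and every p ∈ A^j, one has (∏_{l=0}^{j−1} W(l, p_l)) · L_j > ε if and only if there exists an alive k-mer w ∈ Z whose first j characters agree with p (i.e., w_l = p_l for all l < j). -/
/-!
The score of a k-mer factors as the score of its length-`j` prefix times the product of
its remaining weights. With nonnegative weights that product is at most the lookahead
bound `L_j`, and it equals `L_j` when every later position carries a column maximiser;
so the best completion of a prefix scores exactly `prefScore · L_j`.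
-/

open Finset

noncomputable def colMax {A : Type*} [Fintype A] [Nonempty A] (W : ℕ → A → ℝ) (h : ℕ) : ℝ :=
  Finset.univ.sup' Finset.univ_nonempty (W h)

noncomputable def lookahead {A : Type*} [Fintype A] [Nonempty A]
    (k : ℕ) (W : ℕ → A → ℝ) (j : ℕ) : ℝ :=
  ∏ h ∈ Finset.Ico j k, colMax W h

noncomputable def prefScore {A : Type*} (W : ℕ → A → ℝ) {j : ℕ} (p : Fin j → A) : ℝ :=
  ∏ l : Fin j, W l (p l)

def PrefixAlive {A : Type*} [Fintype A] [Nonempty A]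
    (k : ℕ) (W : ℕ → A → ℝ) (ε : ℝ) {j : ℕ} (p : Fin j → A) : Prop :=
  prefScore W p * lookahead k W j > ε

noncomputable def score {A : Type*} (k : ℕ) (W : ℕ → A → ℝ) (w : Fin k → A) : ℝ :=
  ∏ j : Fin k, W j (w j)

section

variable {A : Type*} (W : ℕ → A → ℝ)

theorem score_eq_prefScore_mul_prod_Ico {k j : ℕ} (hj : j ≤ k) (g : ℕ → A) :
    score k W (fun i : Fin k => g i) =
      prefScore W (fun l : Fin j => g l) * ∏ i ∈ Ico j k, W i (g i) := by
  simp only [score, prefScore, Fin.prod_univ_eq_prod_range (fun i => W i (g i))]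
  exact (prod_range_mul_prod_Ico _ hj).symm

variable [Fintype A] [Nonempty A]

noncomputable def colArgmax (h : ℕ) : A :=
  (exists_mem_eq_sup' univ_nonempty (W h)).choose

theorem colMax_eq_apply_colArgmax (h : ℕ) : colMax W h = W h (colArgmax W h) :=
  (exists_mem_eq_sup' univ_nonempty (W h)).choose_spec.2

theorem prod_Ico_colArgmax_eq_lookahead (k j : ℕ) :
    ∏ i ∈ Ico j k, W i (colArgmax W i) = lookahead k W j :=
  prod_congr rfl fun i _ => (colMax_eq_apply_colArgmax W i).symm

theorem prod_Ico_le_lookahead (hW : ∀ j a, 0 ≤ W j a) (k j : ℕ) (g : ℕ → A) :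
    ∏ i ∈ Ico j k, W i (g i) ≤ lookahead k W j :=
  prod_le_prod (fun i _ => hW i (g i)) fun i _ => le_sup' (W i) (mem_univ (g i))

end

theorem prefix_alive_iff_prefix_of_alive_kmer_general
    {A : Type*} [Fintype A] [Nonempty A]
    (k : ℕ) (W : ℕ → A → ℝ) (hW : ∀ j a, 0 ≤ W j a)
    (ε : ℝ) (j : ℕ) (hj : j ≤ k) (p : Fin j → A) :
    PrefixAlive k W ε p ↔
      ∃ w : Fin k → A, score k W w > ε ∧ ∀ l : Fin j, w (Fin.castLE hj l) = p l := by
  constructor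
  · intro hp
    let g : ℕ → A := fun i => if h : i < j then p ⟨i, h⟩ else colArgmax W i
    have hgp : (fun l : Fin j => g l) = p := funext fun l => dif_pos l.isLt
    have htail : ∏ i ∈ Ico j k, W i (g i) = lookahead k W j := by
      rw [← prod_Ico_colArgmax_eq_lookahead]
      exact prod_congr rfl fun i hi => congrArg (W i) (dif_neg (mem_Ico.mp hi).1.not_gt)
    refine ⟨fun i => g i, ?_, fun l => dif_pos l.isLt⟩
    rwa [score_eq_prefScore_mul_prod_Ico W hj, hgp, htail]
  · rintro ⟨w, hw, hwp⟩
    let g : ℕ → A := Function.extend Fin.val w fun _ => Classical.arbitrary A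
    have hgw : (fun i : Fin k => g i) = w := funext (Fin.val_injective.extend_apply w _)
    have hgp : (fun l : Fin j => g l) = p :=
      funext fun l => (Fin.val_injective.extend_apply _ _ (Fin.castLE hj l)).trans (hwp l)
    calc ε < score k W w := hw
      _ = prefScore W p * ∏ i ∈ Ico j k, W i (g i) := by
        rw [← hgw, score_eq_prefScore_mul_prod_Ico W hj, hgp]
      _ ≤ prefScore W p * lookahead k W j :=
        mul_le_mul_of_nonneg_left (prod_Ico_le_lookahead W hW k j g)
          (prod_nonneg fun l _ => hW l (p l))

/-- A prefix is alive if and only if it is the prefix of an alive k-mer. -/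
theorem prefix_alive_iff_prefix_of_alive_kmer
    {A : Type*} [Fintype A] [Nonempty A]
    (k : ℕ) (hk : 1 ≤ k) (W : ℕ → A → ℝ) (hW : ∀ j a, 0 ≤ W j a)
    (ε : ℝ) (hε : 0 ≤ ε) (j : ℕ) (hj : j ≤ k) (p : Fin j → A) :
    PrefixAlive k W ε p ↔
      ∃ w : Fin k → A, score k W w > ε ∧ ∀ l : Fin j, w (Fin.castLE hj l) = p l :=
  prefix_alive_iff_prefix_of_alive_kmer_general k W hW ε j hj p
end

section
/- A suffix belongs to R if and only if it is the suffix of an alive k-mer. Precisely: for every m with 0 ≤ m ≤ k and every r ∈ A^{k−m}, one has M_left · ∏_{j=0}^{k−m−1} W(m+j, r_j) > ε if and only if there exists an alive k-mer w ∈ Z whose last k−m characters agree with r (i.e., w_{m+j} = r_j for all j < k−m). -/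
open Finset

/-!
An alive `k`-mer ending in `r` has score at most `M_left` times the suffix score of `r`, because
the score factors into a prefix product and a suffix product and each prefix factor is at most
its column maximum. Conversely the bound is attained by spelling out a column maximiser in each
of the first `m` positions, so `M_left` times the suffix score of `r` is the largest score of a
`k`-mer ending in `r`.
-/

section Score

variable {A : Type*} (W : ℕ → A → ℝ)

theorem score_comp_cast {k k' : ℕ} (h : k' = k) (u : Fin k → A) :
    score k' W (u ∘ Fin.cast h) = score k W u := by
  subst h
  rfl

theorem score_add (m n : ℕ) (u : Fin (m + n) → A) :
    score (m + n) W u =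
      (∏ i : Fin m, W i (u (Fin.castAdd n i))) * ∏ j : Fin n, W (m + j) (u (Fin.natAdd m j)) :=
  Fin.prod_univ_add _

end Score

section ColMax

variable {A : Type*} [Fintype A] [Nonempty A] (W : ℕ → A → ℝ)

theorem le_colMax (h : ℕ) (a : A) : W h a ≤ colMax W h :=
  Finset.le_sup' (W h) (Finset.mem_univ a)

theorem exists_eq_colMax (h : ℕ) : ∃ a : A, W h a = colMax W h := by
  obtain ⟨a, -, ha⟩ := Finset.exists_mem_eq_sup' Finset.univ_nonempty (W h)
  exact ⟨a, ha.symm⟩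

theorem prod_le_prod_colMax (hW : ∀ j a, 0 ≤ W j a) (m : ℕ) (g : Fin m → A) :
    ∏ i : Fin m, W i (g i) ≤ ∏ h ∈ range m, colMax W h := by
  rw [← Fin.prod_univ_eq_prod_range]
  exact Finset.prod_le_prod (fun i _ => hW _ _) fun i _ => le_colMax W i (g i)

theorem exists_prod_eq_prod_colMax (m : ℕ) :
    ∃ g : Fin m → A, ∏ i : Fin m, W i (g i) = ∏ h ∈ range m, colMax W h := by
  choose g hg using exists_eq_colMax W
  refine ⟨fun i => g i, ?_⟩
  rw [← Fin.prod_univ_eq_prod_range]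
  exact Finset.prod_congr rfl fun i _ => hg i

end ColMax

/-- A suffix belongs to `R` if and only if it is the suffix of an alive `k`-mer. -/
theorem suffix_in_R_iff_suffix_of_alive_kmer
    {A : Type*} [Fintype A] [Nonempty A]
    (k : ℕ) (W : ℕ → A → ℝ) (hW : ∀ j a, 0 ≤ W j a)
    (ε : ℝ) (m : ℕ) (hm : m ≤ k) (r : Fin (k - m) → A) :
    (∏ h ∈ Finset.range m, colMax W h) * (∏ j : Fin (k - m), W (m + j) (r j)) > ε ↔
      ∃ w : Fin k → A, score k W w > ε ∧
        ∀ j : Fin (k - m), w ⟨m + (j : ℕ), by have := j.isLt; omega⟩ = r j := by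
  have e : m + (k - m) = k := Nat.add_sub_cancel' hm
  constructor
  · intro hR
    obtain ⟨g, hg⟩ := exists_prod_eq_prod_colMax W m
    refine ⟨Fin.append g r ∘ Fin.cast e.symm, ?_, fun j => Fin.append_right g r j⟩
    rw [score_comp_cast, score_add]
    simpa only [Fin.append_left, Fin.append_right, hg] using hR
  · rintro ⟨w, hw, hwr⟩
    have hsuffix : ∀ j : Fin (k - m), w (Fin.cast e (Fin.natAdd m j)) = r j := hwr
    have hsplit := score_add W m (k - m) (w ∘ Fin.cast e)
    rw [score_comp_cast] at hsplit
    simp only [Function.comp_apply, hsuffix] at hsplit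
    calc ε < score k W w := hw
      _ = _ := hsplit
      _ ≤ _ := by
        gcongr
        · exact prod_nonneg fun j _ => hW _ _
        · exact prod_le_prod_colMax W hW m _
end

section
/- (Key sub-claim of the prefix–suffix decomposition lemma's lower bound.) For every m with 0 ≤ m ≤ k, if Z is nonempty then there exists a prefix l ∈ L such that for every suffix r ∈ R the concatenation l⌢r (the k-mer whose first m characters are l and whose last k−m characters are r) is alive, i.e., S(l⌢r) > ε. -/
open Finset

/-! Take for `l` a prefix of column maxima. Its upper bound for a full k-mer is the product of
all column maxima, which is at least the score of any alive k-mer, so `l ∈ L`. And the score of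
`l⌢r` is exactly the quantity `M_left · ∏ W(m + j, r_j)` whose exceeding `ε` defines `r ∈ R`. -/

theorem Fin.prod_univ_eq_mul_prod_of_le {M : Type*} [CommMonoid M] {k m : ℕ} (hm : m ≤ k)
    (f : Fin k → M) :
    ∏ i, f i = (∏ i : Fin m, f (Fin.castLE hm i)) * ∏ j : Fin (k - m), f ⟨m + j, by omega⟩ := by
  rw [← Fin.prod_congr' f (Nat.add_sub_cancel' hm), Fin.prod_univ_add]
  rfl

section Words

variable {A : Type*}

def concatWord {k m : ℕ} (l : Fin m → A) (r : Fin (k - m) → A) : Fin k → A := fun i =>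
  if h : (i : ℕ) < m then l ⟨i, h⟩ else r ⟨(i : ℕ) - m, by have := i.isLt; omega⟩

theorem score_concatWord {k m : ℕ} (hm : m ≤ k) (W : ℕ → A → ℝ) (l : Fin m → A)
    (r : Fin (k - m) → A) :
    score k W (concatWord l r) =
      (∏ j : Fin m, W j (l j)) * ∏ j : Fin (k - m), W (m + j) (r j) := by
  rw [score, Fin.prod_univ_eq_mul_prod_of_le hm]
  simp [concatWord]

variable [Fintype A] [Nonempty A]

theorem exists_forall_apply_eq_colMax (W : ℕ → A → ℝ) : ∃ g : ℕ → A, ∀ h, W h (g h) = colMax W h :=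
  ⟨fun h => (exists_mem_eq_sup' univ_nonempty (W h)).choose,
    fun h => (exists_mem_eq_sup' univ_nonempty (W h)).choose_spec.2.symm⟩

theorem score_le_prod_colMax {k : ℕ} {W : ℕ → A → ℝ} (hW : ∀ j a, 0 ≤ W j a) (w : Fin k → A) :
    score k W w ≤ ∏ h ∈ range k, colMax W h := by
  rw [← Fin.prod_univ_eq_prod_range]
  exact prod_le_prod (fun j _ => hW j (w j)) (fun j _ => le_sup' (W j) (mem_univ (w j)))

end Words

/-- Key sub-claim of the lower bound: if `Z` is nonempty, there is a prefix `l ∈ L` such that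
for every suffix `r ∈ R` the concatenation `l⌢r` is alive. -/
theorem exists_prefix_alive_with_all_suffixes
    {A : Type*} [Fintype A] [Nonempty A]
    (k : ℕ) (W : ℕ → A → ℝ) (hW : ∀ j a, 0 ≤ W j a)
    (ε : ℝ) (m : ℕ) (hm : m ≤ k)
    (hZ : {w : Fin k → A | score k W w > ε}.Nonempty) :
    ∃ l : Fin m → A,
      (∏ j : Fin m, W j (l j)) * (∏ h ∈ Finset.Ico m k, colMax W h) > ε ∧
      ∀ r : Fin (k - m) → A,
        (∏ h ∈ Finset.range m, colMax W h) * (∏ j : Fin (k - m), W (m + j) (r j)) > ε →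
        score k W (fun i : Fin k =>
          if h : (i : ℕ) < m then l ⟨i, h⟩
          else r ⟨(i : ℕ) - m, by have := i.isLt; omega⟩) > ε := by
  obtain ⟨g, hg⟩ := exists_forall_apply_eq_colMax W
  have hprefix : ∏ j : Fin m, W j (g j) = ∏ h ∈ range m, colMax W h := by
    simp only [hg]
    exact Fin.prod_univ_eq_prod_range (colMax W) m
  refine ⟨fun j => g j, ?_, fun r hr => ?_⟩
  · obtain ⟨w, hw⟩ := hZ
    rw [hprefix, prod_range_mul_prod_Ico _ hm]
    exact hw.trans_le (score_le_prod_colMax hW w)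
  · change score k W (concatWord (fun j : Fin m => g j) r) > ε
    rwa [score_concatWord hm, hprefix]
end

section
/- (Dead-prefix lower bound in the worst-case example for branch-and-bound.) In the binary window with identical columns and threshold ε = p^{k−c−1}·(1−p)^{c+1}, the number of dead prefixes ending in 1 whose longest proper prefix is alive is at least C(k, c+1): ∑_{j=1}^{k} |{q ∈ {0,1}^j : q_{j−1} = 1, q is dead, and the length-(j−1) prefix of q is alive}| ≥ C(k, c+1). (This is witnessed by the injection sending each w ∈ {0,1}^k with exactly c+1 ones to its prefix ending at the position of the last 1 of w.) -/
/-!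
Since `1 - p < p`, the score bound `(1-p)^h · p^(k-h)` of a prefix with `h` ones is strictly
decreasing in `h`, and the threshold is exactly this bound for `h = c + 1`. So a prefix is alive
iff it has at most `c` ones, and the dead prefixes of length `j + 1` ending in `1` with alive
parent are those whose first `j` letters contain exactly `c` ones: there are `C(j, c)` of them,
and the hockey-stick identity sums these to `C(k, c + 1)`.
-/

open Finset

/-- A prefix `q` of length `j` is alive in the binary window with identical columns if
`(∏_l W(l, q_l)) · p^(k−j) > ε`, where the lookahead bound is `L_j = p^(k−j)`. -/
def bAlive (p : ℝ) (k : ℕ) (ε : ℝ) {j : ℕ} (q : Fin j → Bool) : Prop :=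
  (∏ l : Fin j, (if q l = true then 1 - p else p)) * p ^ (k - j) > ε

def onesCount {j : ℕ} (q : Fin j → Bool) : ℕ := #{l | q l = true}

lemma onesCount_le {j : ℕ} (q : Fin j → Bool) : onesCount q ≤ j := by
  simpa [onesCount] using card_filter_le univ (q · = true)

lemma prod_ite_eq_pow_onesCount {M : Type*} [CommMonoid M] (a b : M) {j : ℕ}
    (q : Fin j → Bool) :
    ∏ l, (if q l = true then a else b) = a ^ onesCount q * b ^ (j - onesCount q) := by
  have hcompl : #{l | ¬ q l = true} = j - onesCount q := by
    rw [filter_not, card_sdiff_of_subset (filter_subset _ _), card_univ, Fintype.card_fin]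
    rfl
  rw [prod_ite, prod_const, prod_const, hcompl]
  rfl

lemma onesCount_of_last_eq_true {j : ℕ} {q : Fin (j + 1) → Bool}
    (hq : q (Fin.last j) = true) : onesCount q = onesCount (Fin.init q) + 1 := by
  rw [onesCount, onesCount, card_filter, card_filter, Fin.sum_univ_castSucc, hq]
  rfl

lemma card_onesCount_eq (j c : ℕ) : #{q : Fin j → Bool | onesCount q = c} = j.choose c := by
  rw [← card_fin j, ← card_powersetCard c univ, card_fin]
  refine card_bij' (fun q _ => ({l | q l = true} : Finset _)) (fun s _ l => decide (l ∈ s))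
    ?_ ?_ ?_ ?_
  · intro q hq
    rw [mem_filter] at hq
    exact mem_powersetCard.2 ⟨subset_univ _, hq.2⟩
  · intro s hs
    rw [mem_powersetCard] at hs
    rw [mem_filter]
    simpa [onesCount] using hs.2
  · intro q _
    funext l
    simp
  · intro s _
    ext l
    simp

lemma ncard_last_eq_true_onesCount_init (j c : ℕ) :
    {q : Fin (j + 1) → Bool | q (Fin.last j) = true ∧ onesCount (Fin.init q) = c}.ncard =
      j.choose c := by
  have himage : {q : Fin (j + 1) → Bool | q (Fin.last j) = true ∧ onesCount (Fin.init q) = c} =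
      (fun r => Fin.snoc r true) '' ↑({r : Fin j → Bool | onesCount r = c} : Finset _) := by
    ext q
    constructor
    · rintro ⟨hlast, hinit⟩
      exact ⟨Fin.init q, by simpa using hinit, by beta_reduce; rw [← hlast, Fin.snoc_init_self]⟩
    · rintro ⟨r, hr, rfl⟩
      simpa using hr
  have hinj : Function.Injective fun r : Fin j → Bool => (Fin.snoc r true : Fin (j + 1) → Bool) :=
    fun r s h => by simpa using congrArg Fin.init h
  rw [himage, Set.ncard_image_of_injective _ hinj, Set.ncard_coe_finset, card_onesCount_eq]

lemma sum_range_choose_eq_choose_succ (n c : ℕ) :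
    ∑ j ∈ range n, j.choose c = n.choose (c + 1) := by
  induction n with
  | zero => simp
  | succ n ih => rw [sum_range_succ, ih, Nat.choose_succ_succ', add_comm]

lemma pow_mul_pow_sub_eq {K : Type*} [Field K] {a b : K} (hb : b ≠ 0) {n k : ℕ} (hn : n ≤ k) :
    a ^ n * b ^ (k - n) = b ^ k * (a / b) ^ n := by
  rw [pow_sub₀ _ hb hn, div_pow]
  ring

lemma bAlive_iff {p : ℝ} (hp : p ≠ 0) {k : ℕ} (ε : ℝ) {j : ℕ} (hj : j ≤ k) (q : Fin j → Bool) :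
    bAlive p k ε q ↔ ε < p ^ k * ((1 - p) / p) ^ onesCount q := by
  have hj' : j - onesCount q + (k - j) = k - onesCount q := by have := onesCount_le q; omega
  rw [bAlive, prod_ite_eq_pow_onesCount, mul_assoc, ← pow_add, hj',
    pow_mul_pow_sub_eq hp ((onesCount_le q).trans hj), gt_iff_lt]

lemma bAlive_iff_onesCount_le {p : ℝ} (hp₁ : 1 / 2 < p) (hp₂ : p < 1) {k c : ℕ} (hc : c + 1 ≤ k)
    {j : ℕ} (hj : j ≤ k) (q : Fin j → Bool) :
    bAlive p k (p ^ (k - c - 1) * (1 - p) ^ (c + 1)) q ↔ onesCount q ≤ c := by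
  have hp : 0 < p := by linarith
  have hε : p ^ (k - c - 1) * (1 - p) ^ (c + 1) = p ^ k * ((1 - p) / p) ^ (c + 1) := by
    rw [mul_comm, ← pow_mul_pow_sub_eq hp.ne' hc, Nat.sub_sub]
  rw [bAlive_iff hp.ne' _ hj, hε, mul_lt_mul_iff_right₀ (pow_pos hp k),
    pow_lt_pow_iff_right_of_lt_one₀ (div_pos (by linarith) hp) ((div_lt_one hp).2 (by linarith)),
    Nat.lt_succ_iff]

lemma dead_and_bAlive_init_iff {p : ℝ} (hp₁ : 1 / 2 < p) (hp₂ : p < 1) {k c : ℕ}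
    (hc : c + 1 ≤ k) {j : ℕ} (hj : j < k) {q : Fin (j + 1) → Bool} (hq : q (Fin.last j) = true) :
    (¬ bAlive p k (p ^ (k - c - 1) * (1 - p) ^ (c + 1)) q ∧
      bAlive p k (p ^ (k - c - 1) * (1 - p) ^ (c + 1)) (Fin.init q)) ↔
      onesCount (Fin.init q) = c := by
  rw [bAlive_iff_onesCount_le hp₁ hp₂ hc hj, bAlive_iff_onesCount_le hp₁ hp₂ hc hj.le,
    onesCount_of_last_eq_true hq]
  omega

theorem dead_prefixes_lower_bound_general
    (p : ℝ) (hp₁ : 1 / 2 < p) (hp₂ : p < 1) (k c : ℕ) (hc : c + 1 ≤ k) :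
    Nat.choose k (c + 1) ≤
      ∑ j ∈ Finset.range k,
        Set.ncard {q : Fin (j + 1) → Bool |
          q (Fin.last j) = true ∧
          ¬ bAlive p k (p ^ (k - c - 1) * (1 - p) ^ (c + 1)) q ∧
          bAlive p k (p ^ (k - c - 1) * (1 - p) ^ (c + 1))
            (fun l : Fin j => q l.castSucc)} := by
  refine ((sum_congr rfl fun j hj => ?_).trans (sum_range_choose_eq_choose_succ k c)).ge
  rw [← ncard_last_eq_true_onesCount_init j c]
  congr 1
  ext q
  exact and_congr_right (dead_and_bAlive_init_iff hp₁ hp₂ hc (mem_range.1 hj))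

/-- Dead-prefix lower bound in the worst-case example for branch-and-bound: the number of dead
prefixes ending in `1` whose longest proper prefix is alive is at least `C(k, c+1)`.
(Prefix lengths `1, …, k` are indexed here as `j + 1` for `j ∈ range k`.) -/
theorem dead_prefixes_lower_bound
    (p : ℝ) (hp₁ : 1 / 2 < p) (hp₂ : p < 1) (k c : ℕ) (hk : 1 ≤ k) (hc : c + 1 ≤ k) :
    Nat.choose k (c + 1) ≤
      ∑ j ∈ Finset.range k,
        Set.ncard {q : Fin (j + 1) → Bool |
          q (Fin.last j) = true ∧
          ¬ bAlive p k (p ^ (k - c - 1) * (1 - p) ^ (c + 1)) q ∧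
          bAlive p k (p ^ (k - c - 1) * (1 - p) ^ (c + 1))
            (fun l : Fin j => q l.castSucc)} :=
  dead_prefixes_lower_bound_general p hp₁ hp₂ k c hc
end

section
/- (Bound for the total prefix–suffix combination work over all non-root recursion calls of the divide-and-conquer algorithm, used in Theorem 2.) For all integers σ ≥ 2 and n ≥ 1, with k = 2^n: ∑_{i=1}^{n} 2^i · σ^{2^{n−i}} ≤ 2 · (2^n − 1) · σ^{2^{n−1}}, i.e., ∑_{i=1}^{n} 2^i · σ^{k/2^i} ≤ 2·(k − 1)·σ^{k/2}. -/
theorem Nat.sum_Icc_one_two_pow (n : ℕ) : ∑ i ∈ Finset.Icc 1 n, 2 ^ i = 2 * (2 ^ n - 1) := by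
  induction n with
  | zero => simp
  | succ n ih =>
    rw [Finset.sum_Icc_succ_top (by omega), ih, pow_succ]
    have : 1 ≤ 2 ^ n := Nat.one_le_two_pow
    omega

theorem dc_combination_work_bound_general
    (σ n : ℕ) (hσ : 2 ≤ σ) :
    ∑ i ∈ Finset.Icc 1 n, 2 ^ i * σ ^ (2 ^ (n - i)) ≤
      2 * (2 ^ n - 1) * σ ^ (2 ^ (n - 1)) := by
  have term_le : ∀ i ∈ Finset.Icc 1 n, σ ^ (2 ^ (n - i)) ≤ σ ^ (2 ^ (n - 1)) := by
    intro i hi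
    have hi1 : 1 ≤ i := (Finset.mem_Icc.mp hi).1
    exact Nat.pow_le_pow_right (by omega) (Nat.pow_le_pow_right (by norm_num) (by omega))
  calc ∑ i ∈ Finset.Icc 1 n, 2 ^ i * σ ^ (2 ^ (n - i))
      ≤ ∑ i ∈ Finset.Icc 1 n, 2 ^ i * σ ^ (2 ^ (n - 1)) :=
        Finset.sum_le_sum fun i hi => Nat.mul_le_mul_left _ (term_le i hi)
    _ = 2 * (2 ^ n - 1) * σ ^ (2 ^ (n - 1)) := by
        rw [← Finset.sum_mul, Nat.sum_Icc_one_two_pow]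

/-- Bound for the total prefix–suffix combination work over all non-root recursion calls of the
divide-and-conquer algorithm: for `σ ≥ 2`, `n ≥ 1` and `k = 2^n`,
`∑_{i=1}^{n} 2^i · σ^(k/2^i) ≤ 2 · (k − 1) · σ^(k/2)`. -/
theorem dc_combination_work_bound
    (σ n : ℕ) (hσ : 2 ≤ σ) (hn : 1 ≤ n) :
    ∑ i ∈ Finset.Icc 1 n, 2 ^ i * σ ^ (2 ^ (n - i)) ≤
      2 * (2 ^ n - 1) * σ ^ (2 ^ (n - 1)) :=
  dc_combination_work_bound_general σ n hσ
end
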